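/- Let k be an algebraically closed field of characteristic zero, S a finite group, and B a Galois S-algebra over k that is simple as a ring. Then the group of S-equivariant k-algebra automorphisms of B (automorphisms f with f(s·b) = s·f(b) for all s ∈ S, b ∈ B) is isomorphic to the character group Ŝ = Hom(S, kˣ) of group homomorphisms from S to the multiplicative group of k. -/

import Mathlib

/-- The structure map `θ : ⊕_{s ∈ S} B → End_k(B)`, `θ(a·s)(b) = a * s(b)`, of
an `S`-algebra `B` (with `S` acting by `k`-algebra automorphisms via `act`). -/
noncomputable def galoisMap (k : Type*) {B S : Type*} [Field k] [Ring B]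
    [Algebra k B] [Fintype S] [Group S] (act : S →* (B ≃ₐ[k] B)) :
    (S → B) → (B →ₗ[k] B) :=
  fun f => ∑ s : S, (LinearMap.mulLeft k (f s)) ∘ₗ (act s).toLinearMap

/-- The group of `S`-equivariant `k`-algebra automorphisms of `B`. -/
def equivariantAut (k : Type*) {B S : Type*} [Field k] [Ring B] [Algebra k B]
    [Group S] (act : S →* (B ≃ₐ[k] B)) : Subgroup (B ≃ₐ[k] B) where
  carrier := {f | ∀ (s : S) (b : B), f (act s b) = act s (f b)}
  one_mem' := fun _ _ => rfl
  mul_mem' := by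
    intro f g hf hg s b
    simp only [AlgEquiv.mul_apply]
    rw [hg, hf]
  inv_mem' := by
    intro f hf s b
    apply f.injective
    show f (f.symm ((act s) b)) = f ((act s) (f.symm b))
    rw [AlgEquiv.apply_symm_apply, hf, AlgEquiv.apply_symm_apply]

/-!
Every `k`-automorphism `f` of `B` is inner. If `θ(g)` is the map `x ↦ f x * u`, each coefficient
`g t` satisfies `f x * g t = g t * t(x)`. In a simple algebra with centre `k` a nonzero such
intertwiner is a unit, unique up to a scalar, so `u ↦ g` embeds `B` into `|S|` spaces of dimension
at most one; as `dim B = |S|`, the space of intertwiners for `t = 1`, i.e. of `u` with `f = u(·)u⁻¹`,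
is nonzero.

A character `χ` goes to conjugation by a unit `u` with `s(u) = χ(s) u`. Such units exist because
`θ` is bijective, and they are unique up to a scalar because `B^S = k`. Conversely, if `f` is
conjugation by `u` and commutes with `S`, then each `s(u)` also conjugates to `f`, so
`s(u) = χ(s) u` for a character `χ`.
-/

open Module Function

section SimpleAlgebra

variable {B : Type*} [Ring B]

theorem isUnit_of_forall_exists_mul_eq [IsSimpleRing B] [IsDedekindFiniteMonoid B] {u : B}
    (hu : u ≠ 0) (h : ∀ x, ∃ y, x * u = u * y) : IsUnit u := by
  let I := TwoSidedIdeal.mk' (Set.range (u * ·)) ⟨0, mul_zero u⟩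
    (by rintro _ _ ⟨x, rfl⟩ ⟨y, rfl⟩; exact ⟨x + y, mul_add _ _ _⟩)
    (by rintro _ ⟨x, rfl⟩; exact ⟨-x, mul_neg _ _⟩)
    (by
      rintro a _ ⟨c, rfl⟩
      obtain ⟨y, hy⟩ := h a
      exact ⟨y * c, show u * (y * c) = a * (u * c) by rw [← mul_assoc, ← hy, mul_assoc]⟩)
    (by rintro _ b ⟨a, rfl⟩; exact ⟨a * b, (mul_assoc _ _ _).symm⟩)
  have hone : (1 : B) ∈ I :=
    IsSimpleRing.one_mem_of_ne_zero_mem I hu ((TwoSidedIdeal.mem_mk' ..).2 ⟨1, mul_one u⟩)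
  obtain ⟨v, hv⟩ := (TwoSidedIdeal.mem_mk' ..).1 hone
  exact IsUnit.of_mul_eq_one v hv

variable (k : Type*) [Field k] [Algebra k B]

theorem exists_algebraMap_eq_of_mem_center [IsAlgClosed k] [FiniteDimensional k B]
    [IsSimpleRing B] {c : B} (hc : c ∈ Subalgebra.center k B) : ∃ a : k, algebraMap k B a = c := by
  have : IsDomain (Subalgebra.center k B) :=
    (IsSimpleRing.isField_center B : IsField (Subalgebra.center k B)).isDomain
  obtain ⟨a, ha⟩ := (IsAlgClosed.algebraMap_bijective_of_isIntegral (k := k)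
    (K := Subalgebra.center k B)).2 ⟨c, hc⟩
  exact ⟨a, congrArg Subtype.val ha⟩

def intertwiners (f g : B ≃ₐ[k] B) : Submodule k B where
  carrier := {u | ∀ x, f x * u = u * g x}
  add_mem' hu hv x := by rw [mul_add, add_mul, hu x, hv x]
  zero_mem' x := by rw [mul_zero, zero_mul]
  smul_mem' c u hu x := by rw [mul_smul_comm, smul_mul_assoc, hu x]

variable {k}

theorem mem_intertwiners {f g : B ≃ₐ[k] B} {u : B} :
    u ∈ intertwiners k f g ↔ ∀ x, f x * u = u * g x :=
  Iff.rfl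

theorem isUnit_of_mem_intertwiners [IsSimpleRing B] [FiniteDimensional k B] {f g : B ≃ₐ[k] B}
    {u : B} (hu : u ∈ intertwiners k f g) (hu0 : u ≠ 0) : IsUnit u := by
  have := IsArtinianRing.of_finite k B
  refine isUnit_of_forall_exists_mul_eq hu0 fun x => ⟨g (f.symm x), ?_⟩
  simpa using hu (f.symm x)

/-- `u⁻¹ * v` is central. -/
theorem exists_smul_eq_of_mem_intertwiners [IsAlgClosed k] [IsSimpleRing B]
    [FiniteDimensional k B] {f g : B ≃ₐ[k] B} {u v : B} (hu : u ∈ intertwiners k f g)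
    (hv : v ∈ intertwiners k f g) (hu0 : u ≠ 0) : ∃ a : k, a • u = v := by
  obtain ⟨w, rfl⟩ := isUnit_of_mem_intertwiners hu hu0
  have hcenter : ↑w⁻¹ * v ∈ Subalgebra.center k B := by
    rw [Subalgebra.mem_center_iff]
    intro x
    obtain ⟨y, rfl⟩ := g.surjective x
    have hwy : g y * ↑w⁻¹ = ↑w⁻¹ * f y := by
      rw [Units.mul_inv_eq_iff_eq_mul, mul_assoc, hu y, Units.inv_mul_cancel_left]
    rw [← mul_assoc, hwy, mul_assoc, hv y, mul_assoc]
  obtain ⟨a, ha⟩ := exists_algebraMap_eq_of_mem_center k hcenter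
  refine ⟨a, ?_⟩
  rw [Algebra.smul_def, Algebra.commutes, ha, Units.mul_inv_cancel_left]

theorem finrank_intertwiners_le_one [IsAlgClosed k] [IsSimpleRing B] [FiniteDimensional k B]
    (f g : B ≃ₐ[k] B) : finrank k (intertwiners k f g) ≤ 1 := by
  by_cases h : intertwiners k f g = ⊥
  · rw [h, finrank_bot]
    exact zero_le_one
  obtain ⟨u, hu, hu0⟩ := Submodule.exists_mem_ne_zero_of_ne_bot h
  refine finrank_le_one ⟨u, hu⟩ fun v => ?_
  obtain ⟨a, ha⟩ := exists_smul_eq_of_mem_intertwiners hu v.2 hu0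
  exact ⟨a, Subtype.ext ha⟩

variable (k) in
def innerAut : Bˣ →* (B ≃ₐ[k] B) :=
  (MulSemiringAction.toAlgAut (ConjAct Bˣ) k B).comp ConjAct.toConjAct.toMonoidHom

theorem innerAut_apply (u : Bˣ) (x : B) : innerAut k u x = u * x * ↑u⁻¹ :=
  rfl

theorem innerAut_eq_iff {u : Bˣ} {f : B ≃ₐ[k] B} :
    innerAut k u = f ↔ (u : B) ∈ intertwiners k f 1 := by
  simp only [AlgEquiv.ext_iff, innerAut_apply, Units.mul_inv_eq_iff_eq_mul, mem_intertwiners,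
    AlgEquiv.one_apply, eq_comm]

theorem innerAut_eq_one_iff {u : Bˣ} : innerAut k u = 1 ↔ (u : B) ∈ Subalgebra.center k B := by
  simp only [innerAut_eq_iff, mem_intertwiners, AlgEquiv.one_apply, Subalgebra.mem_center_iff]

end SimpleAlgebra

section Equivariant

variable {k B S : Type*} [Field k] [Ring B] [Algebra k B] [Group S] {act : S →* (B ≃ₐ[k] B)}

theorem act_mem_intertwiners {f : B ≃ₐ[k] B} (hf : f ∈ equivariantAut k act) {u : B}
    (hu : u ∈ intertwiners k f 1) (s : S) : act s u ∈ intertwiners k f 1 := by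
  intro x
  have hx := hu ((act s).symm x)
  rw [AlgEquiv.one_apply] at hx ⊢
  calc f x * act s u = act s (f ((act s).symm x) * u) := by
        rw [map_mul, ← hf s, AlgEquiv.apply_symm_apply]
    _ = act s u * x := by rw [hx, map_mul, AlgEquiv.apply_symm_apply]

variable (act) in
def IsSemiInvariant (χ : S →* kˣ) (u : B) : Prop :=
  ∀ s, act s u = χ s • u

theorem IsSemiInvariant.mul {χ ψ : S →* kˣ} {u v : B} (hu : IsSemiInvariant act χ u)
    (hv : IsSemiInvariant act ψ v) : IsSemiInvariant act (χ * ψ) (u * v) := fun s => by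
  rw [map_mul, hu s, hv s, smul_mul_smul_comm, MonoidHom.mul_apply]

theorem innerAut_mem_equivariantAut {χ : S →* kˣ} {u : Bˣ} (hu : IsSemiInvariant act χ u) :
    innerAut k u ∈ equivariantAut k act := by
  intro s b
  have key : act s (innerAut k u b) * u = u * act s b := by
    have h := congrArg (act s) ((innerAut_eq_iff.1 rfl : (u : B) ∈ intertwiners k _ 1) b)
    rw [map_mul, map_mul, AlgEquiv.one_apply, hu s, mul_smul_comm, smul_mul_assoc] at h
    exact MulAction.injective (χ s) h
  rw [innerAut_apply, ← key, Units.mul_inv_cancel_right]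

theorem exists_isSemiInvariant_of_forall_exists_smul_eq {u : B} (hu : u ≠ 0)
    (h : ∀ s, ∃ a : k, a • u = act s u) : ∃ χ : S →* kˣ, IsSemiInvariant act χ u := by
  choose a ha using h
  have hne : ∀ s, a s ≠ 0 := fun s h0 =>
    hu <| (act s).injective <| by rw [← ha s, h0, zero_smul, map_zero]
  have hmul : ∀ s t, a (s * t) = a s * a t := fun s t => smul_left_injective k hu <| by
    dsimp only
    rw [ha, map_mul, AlgEquiv.mul_apply, ← ha t, map_smul, ← ha s, smul_smul, mul_comm]
  exact ⟨MonoidHom.mk' (fun s => Units.mk0 (a s) (hne s)) fun s t => Units.ext (hmul s t),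
    fun s => (ha s).symm⟩

end Equivariant

section GaloisAlgebra

variable {k B S : Type*} [Field k] [Ring B] [Algebra k B] [Group S] [Fintype S]
  {act : S →* (B ≃ₐ[k] B)}

theorem galoisMap_apply (g : S → B) (b : B) : galoisMap k act g b = ∑ s, g s * act s b := by
  simp [galoisMap]

variable (act) in
noncomputable def galoisLinearMap : (S → B) →ₗ[k] (B →ₗ[k] B) where
  toFun := galoisMap k act
  map_add' g h := by
    ext b
    simp only [galoisMap_apply, LinearMap.add_apply, Pi.add_apply, add_mul, Finset.sum_add_distrib]
  map_smul' c g := by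
    ext b
    simp only [galoisMap_apply, LinearMap.smul_apply, Pi.smul_apply, smul_mul_assoc,
      Finset.smul_sum, RingHom.id_apply]

theorem coe_galoisLinearMap : ⇑(galoisLinearMap act) = galoisMap k act :=
  rfl

theorem finrank_eq_card_of_bijective_galoisMap (hG : Bijective (galoisMap k act)) [Nontrivial B]
    [FiniteDimensional k B] : finrank k B = Fintype.card S := by
  have h := (LinearEquiv.ofBijective (galoisLinearMap act) hG).finrank_eq
  rw [Module.finrank_pi_fintype, Module.finrank_linearMap, Finset.sum_const, Finset.card_univ,
    smul_eq_mul] at h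
  exact (Nat.eq_of_mul_eq_mul_right finrank_pos h).symm

/-- Every `θ(g)` is right `B^S`-linear, and `θ` hits `x ↦ φ x • 1` with `φ 1 = 1`. -/
theorem exists_algebraMap_eq_of_forall_act_eq (hG : Surjective (galoisMap k act))
    [Nontrivial B] {c : B} (hc : ∀ s, act s c = c) : ∃ a : k, algebraMap k B a = c := by
  obtain ⟨φ, hφ⟩ := Module.Projective.exists_dual_eq_one k (one_ne_zero : (1 : B) ≠ 0)
  obtain ⟨g, hg⟩ := hG (φ.smulRight 1)
  have hlin : galoisMap k act g (1 * c) = galoisMap k act g 1 * c := by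
    simp only [galoisMap_apply, Finset.sum_mul, map_mul, hc, mul_assoc]
  rw [hg, one_mul, LinearMap.smulRight_apply, LinearMap.smulRight_apply, hφ, one_smul,
    one_mul] at hlin
  exact ⟨φ c, by rw [Algebra.algebraMap_eq_smul_one, hlin]⟩

theorem mem_intertwiners_of_galoisMap (hG : Injective (galoisMap k act)) {f : B ≃ₐ[k] B}
    {g : S → B} (h : ∀ x b, galoisMap k act g (x * b) = f x * galoisMap k act g b) (t : S) :
    g t ∈ intertwiners k f (act t) := by
  intro x
  have hzero : (fun s => f x * g s - g s * act s x) = 0 := hG <| by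
    rw [← coe_galoisLinearMap, map_zero]
    ext b
    calc galoisMap k act (fun s => f x * g s - g s * act s x) b
        = f x * galoisMap k act g b - galoisMap k act g (x * b) := by
          simp only [galoisMap_apply, sub_mul, Finset.sum_sub_distrib, Finset.mul_sum, map_mul,
            mul_assoc]
      _ = 0 := by rw [h, sub_self]
  simpa [sub_eq_zero] using congrFun hzero t

/-- `u ↦ θ⁻¹(x ↦ f x * u)` embeds `B` into `∏ₜ intertwiners f (act t)`. -/
theorem finrank_le_sum_finrank_intertwiners (hG : Bijective (galoisMap k act))
    [FiniteDimensional k B] (f : B ≃ₐ[k] B) :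
    finrank k B ≤ ∑ t, finrank k (intertwiners k f (act t)) := by
  let e := LinearEquiv.ofBijective (galoisLinearMap act) hG
  let R : B →ₗ[k] (S → B) :=
    e.symm.toLinearMap ∘ₗ LinearMap.lcomp k B f.toLinearMap ∘ₗ (LinearMap.mul k B).flip
  have hR : ∀ u x, galoisMap k act (R u) x = f x * u := fun u x =>
    LinearMap.congr_fun (e.apply_symm_apply _) x
  have hmem : ∀ u t, R u t ∈ intertwiners k f (act t) := fun u =>
    mem_intertwiners_of_galoisMap hG.1 fun x b => by rw [hR, hR, map_mul, mul_assoc]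
  let J : B →ₗ[k] Π t, intertwiners k f (act t) :=
    LinearMap.pi fun t => (LinearMap.proj t ∘ₗ R).codRestrict _ (hmem · t)
  have hJ : Injective J := by
    intro u v huv
    have hRuv : R u = R v := funext fun t => congrArg Subtype.val (congrFun huv t)
    simpa [hR] using congrArg (fun g => galoisMap k act g 1) hRuv
  simpa [Module.finrank_pi_fintype] using LinearMap.finrank_le_finrank_of_injective hJ

theorem exists_innerAut_eq (hG : Bijective (galoisMap k act)) [IsAlgClosed k] [IsSimpleRing B]
    [FiniteDimensional k B] (f : B ≃ₐ[k] B) : ∃ u : Bˣ, innerAut k u = f := by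
  have hne : intertwiners k f 1 ≠ ⊥ := by
    intro hbot
    have hlt : ∑ t, finrank k (intertwiners k f (act t)) < ∑ _t : S, 1 :=
      Finset.sum_lt_sum (fun t _ => finrank_intertwiners_le_one f (act t))
        ⟨1, Finset.mem_univ _, by simp [hbot]⟩
    have := finrank_le_sum_finrank_intertwiners hG f
    rw [finrank_eq_card_of_bijective_galoisMap hG] at this
    rw [Finset.sum_const, Finset.card_univ, smul_eq_mul, mul_one] at hlt
    omega
  obtain ⟨u, hu, hu0⟩ := Submodule.exists_mem_ne_zero_of_ne_bot hne
  obtain ⟨w, rfl⟩ := isUnit_of_mem_intertwiners hu hu0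
  exact ⟨w, innerAut_eq_iff.2 hu⟩

/-- The average `∑ₛ χ(s)⁻¹ • s(m)` is semi-invariant, and nonzero for some `m` by injectivity
of `θ`. -/
theorem exists_isSemiInvariant_ne_zero (hG : Injective (galoisMap k act)) [Nontrivial B]
    (χ : S →* kˣ) : ∃ u ≠ 0, IsSemiInvariant act χ u := by
  let g : S → B := fun s => (χ s)⁻¹ • 1
  have hg : galoisMap k act g ≠ 0 := fun h => by
    have := congrFun (hG (h.trans (map_zero (galoisLinearMap act)).symm)) 1
    simp [g] at this
  obtain ⟨m, hm⟩ : ∃ m, galoisMap k act g m ≠ 0 := by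
    by_contra! h
    exact hg (LinearMap.ext h)
  refine ⟨_, hm, fun t => ?_⟩
  simp only [galoisMap_apply, g, smul_mul_assoc, one_mul, map_sum, Finset.smul_sum]
  refine Fintype.sum_equiv (Equiv.mulLeft t) _ _ fun s => ?_
  simp only [Equiv.coe_mulLeft, map_mul, AlgEquiv.mul_apply, smul_smul, mul_inv_rev]
  rw [mul_left_comm, mul_inv_cancel, mul_one, Units.smul_def, map_smul, Units.smul_def]

theorem IsSemiInvariant.isUnit (hG : Surjective (galoisMap k act)) [FiniteDimensional k B]
    {χ : S →* kˣ} {u : B} (hu : IsSemiInvariant act χ u) (hu0 : u ≠ 0) : IsUnit u := by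
  have := IsArtinianRing.of_finite k B
  obtain ⟨φ, hφ⟩ := Module.Projective.exists_dual_eq_one k hu0
  obtain ⟨g, hg⟩ := hG (φ.smulRight 1)
  refine IsUnit.of_mul_eq_one_right (∑ s, χ s • g s) ?_
  have h1 := LinearMap.congr_fun hg u
  rw [galoisMap_apply, LinearMap.smulRight_apply, hφ, one_smul] at h1
  rw [← h1, Finset.sum_mul]
  refine Finset.sum_congr rfl fun s _ => ?_
  rw [hu s, smul_mul_assoc, mul_smul_comm]

theorem exists_isSemiInvariant_unit (hG : Bijective (galoisMap k act)) [Nontrivial B]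
    [FiniteDimensional k B] (χ : S →* kˣ) : ∃ u : Bˣ, IsSemiInvariant act χ u := by
  obtain ⟨u, hu0, hu⟩ := exists_isSemiInvariant_ne_zero hG.1 χ
  obtain ⟨w, rfl⟩ := hu.isUnit hG.2 hu0
  exact ⟨w, hu⟩

/-- `u⁻¹ * v` is `S`-invariant, hence a scalar, hence central. -/
theorem innerAut_eq_of_isSemiInvariant (hG : Surjective (galoisMap k act)) [Nontrivial B]
    {χ : S →* kˣ} {u v : Bˣ} (hu : IsSemiInvariant act χ u) (hv : IsSemiInvariant act χ v) :
    innerAut k u = innerAut k v := by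
  have hfix : ∀ s, act s ↑(u⁻¹ * v) = ↑(u⁻¹ * v) := fun s => by
    have h := congrArg (act s) (u.mul_inv_cancel_left (v : B))
    rw [map_mul, hu s, hv s, smul_mul_assoc] at h
    rw [← (Units.mul_right_inj u), Units.val_mul, Units.mul_inv_cancel_left]
    exact MulAction.injective (χ s) h
  obtain ⟨a, ha⟩ := exists_algebraMap_eq_of_forall_act_eq hG hfix
  have hcenter : innerAut k (u⁻¹ * v) = 1 :=
    innerAut_eq_one_iff.2 (ha ▸ Subalgebra.mem_center_iff.2 fun b => (Algebra.commutes a b).symm)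
  rw [← mul_inv_cancel_left u v, map_mul, hcenter, mul_one]

variable [Nontrivial B] [FiniteDimensional k B]

noncomputable def semiInvariantUnit (hG : Bijective (galoisMap k act)) (χ : S →* kˣ) : Bˣ :=
  (exists_isSemiInvariant_unit hG χ).choose

theorem isSemiInvariant_semiInvariantUnit (hG : Bijective (galoisMap k act)) (χ : S →* kˣ) :
    IsSemiInvariant act χ (semiInvariantUnit hG χ) :=
  (exists_isSemiInvariant_unit hG χ).choose_spec

noncomputable def equivariantAutOfCharacter (hG : Bijective (galoisMap k act)) :
    (S →* kˣ) →* equivariantAut k act :=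
  MonoidHom.mk' (fun χ => ⟨innerAut k (semiInvariantUnit hG χ),
      innerAut_mem_equivariantAut (isSemiInvariant_semiInvariantUnit hG χ)⟩)
    fun χ ψ => Subtype.ext <| by
      rw [Subgroup.coe_mul, ← map_mul]
      exact innerAut_eq_of_isSemiInvariant hG.2 (isSemiInvariant_semiInvariantUnit hG _)
        ((isSemiInvariant_semiInvariantUnit hG χ).mul (isSemiInvariant_semiInvariantUnit hG ψ))

theorem equivariantAutOfCharacter_injective (hG : Bijective (galoisMap k act)) [IsAlgClosed k]
    [IsSimpleRing B] : Injective (equivariantAutOfCharacter hG) := by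
  rw [injective_iff_map_eq_one]
  intro χ hχ
  set u := semiInvariantUnit hG χ
  obtain ⟨a, ha⟩ := exists_algebraMap_eq_of_mem_center k
    (innerAut_eq_one_iff.1 (congrArg Subtype.val hχ : innerAut k u = 1))
  ext s
  have hfix : act s (u : B) = u := by rw [← ha, AlgEquiv.commutes]
  rw [isSemiInvariant_semiInvariantUnit hG χ s, Units.smul_def] at hfix
  simpa using smul_left_injective k u.ne_zero (hfix.trans (one_smul k _).symm)

theorem equivariantAutOfCharacter_surjective (hG : Bijective (galoisMap k act)) [IsAlgClosed k]
    [IsSimpleRing B] : Surjective (equivariantAutOfCharacter hG) := by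
  rintro ⟨f, hf⟩
  obtain ⟨u, rfl⟩ := exists_innerAut_eq hG f
  have hu : (u : B) ∈ intertwiners k (innerAut k u) 1 := innerAut_eq_iff.1 rfl
  obtain ⟨χ, hχ⟩ := exists_isSemiInvariant_of_forall_exists_smul_eq u.ne_zero fun s =>
    exists_smul_eq_of_mem_intertwiners hu (act_mem_intertwiners hf hu s) u.ne_zero
  exact ⟨χ, Subtype.ext (innerAut_eq_of_isSemiInvariant hG.2
    (isSemiInvariant_semiInvariantUnit hG χ) hχ)⟩

end GaloisAlgebra

theorem stmt15_general (k B S : Type*) [Field k] [IsAlgClosed k]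
    [Ring B] [Algebra k B] [FiniteDimensional k B] [Group S] [Fintype S]
    (act : S →* (B ≃ₐ[k] B))
    (hGalois : Function.Bijective (galoisMap k act))
    (hsimple : IsSimpleRing B) :
    Nonempty ((equivariantAut k act) ≃* (S →* kˣ)) := by
  have := hsimple
  exact ⟨(MulEquiv.ofBijective (equivariantAutOfCharacter hGalois)
    ⟨equivariantAutOfCharacter_injective hGalois, equivariantAutOfCharacter_surjective hGalois⟩).symm⟩

theorem stmt15 (k B S : Type*) [Field k] [IsAlgClosed k] [CharZero k]
    [Ring B] [Algebra k B] [FiniteDimensional k B] [Group S] [Fintype S]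
    (act : S →* (B ≃ₐ[k] B))
    (hGalois : Function.Bijective (galoisMap k act))
    (hsimple : IsSimpleRing B) :
    Nonempty ((equivariantAut k act) ≃* (S →* kˣ)) :=
  stmt15_general k B S act hGalois hsimple
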